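/- arXiv:1011.4609 — 2 statements merged into one kernel-verified Lean document; each statement's English description precedes it below -/
import Mathlib

section
/- For a uniformly random σ-ary string s of length n, the expected k-th order empirical entropy satisfies E[H_k(s)] ≤ (C(n,2)/σ^k) · log₂ σ, hence E[H_k(s)] < (n²/σ^k) · log₂ σ. -/
/-!
Every string has `H_k(s) ≤ log₂ σ`: each context string has zeroth-order entropy at most
`log₂ σ` (Gibbs' inequality, via `log x ≤ x - 1`), and the context strings together have at most
`n` letters. If no two positions `i < j < n` start equal `k`-tuples, every context string has at
most one letter and `H_k(s) = 0`. Hence `E[H_k] ≤ P(some pair matches) · log₂ σ`, and the union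
bound over the `C(n, 2)` pairs, each matching with probability at most `σ^(-k)`, gives the claim.
-/

open scoped Classical
open Finset Real Filter

noncomputable section

/-- Zeroth-order empirical entropy of a multiset of characters (base-2 bits per character). -/
def H0M {A : Type*} [Fintype A] (t : Multiset A) : ℝ :=
  (1 / (Multiset.card t : ℝ)) *
    ∑ a : A, (t.count a : ℝ) * Real.logb 2 ((Multiset.card t : ℝ) / (t.count a : ℝ))

/-- Zeroth-order empirical entropy of a string `s` of length `n`. -/
def H0F {A : Type*} [Fintype A] {n : ℕ} (s : Fin n → A) : ℝ :=
  H0M (Multiset.map s Finset.univ.val)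

/-- The context string `s_α`: the multiset of characters immediately following
occurrences of the `k`-tuple `α` in `s`. -/
def ctxF {A : Type*} [Fintype A] {n : ℕ} (k : ℕ) (s : Fin n → A) (α : Fin k → A) : Multiset A :=
  Multiset.map (fun i : Fin n => s ⟨min ((i : ℕ) + k) (n - 1), by have := i.isLt; omega⟩)
    ((Finset.univ.filter (fun i : Fin n =>
      (i : ℕ) + k < n ∧
        ∀ t : Fin k, s ⟨min ((i : ℕ) + (t : ℕ)) (n - 1), by have := i.isLt; omega⟩ = α t)).val)

/-- `k`-th order empirical entropy of a string `s` of length `n`. -/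
def HkF {A : Type*} [Fintype A] {n : ℕ} (k : ℕ) (s : Fin n → A) : ℝ :=
  (1 / (n : ℝ)) * ∑ α : Fin k → A, (Multiset.card (ctxF k s α) : ℝ) * H0M (ctxF k s α)

/-- The `k`-tuples of `s` starting at positions `i` and `j` both fit in `s` and coincide. -/
def MatchAt {A : Type*} {n : ℕ} (s : Fin n → A) (k i j : ℕ) : Prop :=
  i + k ≤ n ∧ j + k ≤ n ∧
    ∀ t, t < k → ∀ (hi : i + t < n) (hj : j + t < n), s ⟨i + t, hi⟩ = s ⟨j + t, hj⟩

/-- `s` contains two matching `k`-tuples. -/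
def HasMatch {A : Type*} {n : ℕ} (k : ℕ) (s : Fin n → A) : Prop :=
  ∃ i j : ℕ, i < j ∧ MatchAt s k i j

theorem Real.sum_mul_log_div_le {ι : Type*} (s : Finset ι) (c : ι → ℝ) (hc : ∀ i ∈ s, 0 ≤ c i) :
    ∑ i ∈ s, c i * Real.log ((∑ j ∈ s, c j) / c i) ≤ (∑ i ∈ s, c i) * Real.log #s := by
  set N := ∑ j ∈ s, c j
  rcases s.eq_empty_or_nonempty with rfl | hs
  · simp
  have hm : (0 : ℝ) < #s := by exact_mod_cast hs.card_pos
  -- `log x ≤ x - 1` at `x = N / (#s * c i)`, termwise; the error terms `N / #s - c i` sum to zero.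
  have key : ∀ i ∈ s, c i * Real.log (N / c i) ≤ c i * Real.log #s + (N / #s - c i) := by
    intro i hi
    have hN : c i ≤ N := Finset.single_le_sum hc hi
    rcases (hc i hi).eq_or_lt with h0 | hpos
    · rw [← h0]; simp only [zero_mul, sub_zero, zero_add]
      exact div_nonneg (h0 ▸ hN) hm.le
    have hx : 0 < N / (#s * c i) := by have := hpos.trans_le hN; positivity
    have hsplit : N / c i = #s * (N / (#s * c i)) := by field_simp
    rw [hsplit, Real.log_mul hm.ne' hx.ne', mul_add]
    have hlog := mul_le_mul_of_nonneg_left (Real.log_le_sub_one_of_pos hx) hpos.le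
    have hci : c i * (N / (#s * c i) - 1) = N / #s - c i := by field_simp
    linarith
  calc ∑ i ∈ s, c i * Real.log (N / c i)
      ≤ ∑ i ∈ s, (c i * Real.log #s + (N / #s - c i)) := Finset.sum_le_sum key
    _ = N * Real.log #s := by
      rw [Finset.sum_add_distrib, Finset.sum_sub_distrib, ← Finset.sum_mul, Finset.sum_const,
        nsmul_eq_mul]
      field_simp
      ring

theorem Real.logb_natCast_nonneg (b : ℕ) (n : ℕ) : 0 ≤ Real.logb b n :=
  div_nonneg (Real.log_natCast_nonneg n) (Real.log_natCast_nonneg b)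

theorem H0M_le_logb_card {A : Type*} [Fintype A] (t : Multiset A) :
    H0M t ≤ Real.logb 2 (Fintype.card A) := by
  have hcount : ∑ a : A, (t.count a : ℝ) = Multiset.card t := by
    exact_mod_cast Multiset.sum_count_eq_card (fun a _ => Finset.mem_univ a)
  have hsum := Real.sum_mul_log_div_le Finset.univ (fun a => (t.count a : ℝ))
    (fun _ _ => by positivity)
  rw [hcount, Finset.card_univ] at hsum
  rw [H0M, one_div_mul_eq_div]
  refine div_le_of_le_mul₀ (by positivity) (by exact_mod_cast Real.logb_natCast_nonneg 2 _) ?_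
  simp only [Real.logb, mul_div_assoc', ← Finset.sum_div, div_mul_eq_mul_div]
  gcongr
  linarith

theorem H0M_eq_zero_of_card_le_one {A : Type*} [Fintype A] {t : Multiset A}
    (h : Multiset.card t ≤ 1) : H0M t = 0 := by
  rcases Nat.le_one_iff_eq_zero_or_eq_one.mp h with h0 | h1
  · simp [H0M, h0]
  · have hterm : ∀ a : A, (t.count a : ℝ) * Real.logb 2 (1 / (t.count a : ℝ)) = 0 := by
      intro a
      have hc : t.count a ≤ 1 := h1 ▸ Multiset.count_le_card a t
      interval_cases t.count a <;> simp
    simp only [H0M, h1, Nat.cast_one, hterm, Finset.sum_const_zero, mul_zero]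

section Contexts

variable {A : Type*} {n : ℕ}

-- The `k`-tuple that `ctxF` compares with `α` at position `i`.
def ctxTuple (k : ℕ) (s : Fin n → A) (i : Fin n) : Fin k → A :=
  fun t => s ⟨min ((i : ℕ) + (t : ℕ)) (n - 1), by have := i.isLt; omega⟩

theorem ctxTuple_apply_of_lt {k : ℕ} (s : Fin n → A) (i : Fin n) (t : Fin k)
    (h : (i : ℕ) + t < n) : ctxTuple k s i t = s ⟨i + t, h⟩ := by
  simp only [ctxTuple]
  congr
  omega

theorem card_ctxF [Fintype A] (k : ℕ) (s : Fin n → A) (α : Fin k → A) :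
    Multiset.card (ctxF k s α) = #{i : Fin n | (i : ℕ) + k < n ∧ ctxTuple k s i = α} := by
  simp only [ctxF, Multiset.card_map, funext_iff, ctxTuple]
  rfl

theorem sum_card_ctxF_le [Fintype A] (k : ℕ) (s : Fin n → A) :
    ∑ α : Fin k → A, Multiset.card (ctxF k s α) ≤ n := by
  calc ∑ α : Fin k → A, Multiset.card (ctxF k s α)
      ≤ ∑ α : Fin k → A, #{i : Fin n | ctxTuple k s i = α} := by
        gcongr with α
        rw [card_ctxF]
        exact Finset.card_le_card (Finset.monotone_filter_right _ fun _ _ => And.right)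
    _ = n := by
        rw [← Finset.card_eq_sum_card_fiberwise (fun i _ => Finset.mem_univ _), Finset.card_univ,
          Fintype.card_fin]

theorem matchAt_of_ctxTuple_eq {k : ℕ} {s : Fin n → A} {i j : Fin n}
    (hi : (i : ℕ) + k < n) (hj : (j : ℕ) + k < n) (h : ctxTuple k s i = ctxTuple k s j) :
    MatchAt s k i j := by
  refine ⟨hi.le, hj.le, fun t ht hit hjt => ?_⟩
  rw [← ctxTuple_apply_of_lt s i ⟨t, ht⟩ hit, ← ctxTuple_apply_of_lt s j ⟨t, ht⟩ hjt, h]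

theorem card_ctxF_le_one [Fintype A] {k : ℕ} {s : Fin n → A}
    (h : ∀ j < n, ∀ i < j, ¬ MatchAt s k i j) (α : Fin k → A) : Multiset.card (ctxF k s α) ≤ 1 := by
  rw [card_ctxF, Finset.card_le_one]
  simp only [Finset.mem_filter, Finset.mem_univ, true_and]
  rintro i ⟨hi, rfl⟩ j ⟨hj, hij⟩
  by_contra hne
  rcases Fin.lt_or_lt_of_ne hne with hlt | hlt
  · exact h j j.isLt i hlt (matchAt_of_ctxTuple_eq hi hj hij.symm)
  · exact h i i.isLt j hlt (matchAt_of_ctxTuple_eq hj hi hij)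

theorem HkF_le_logb_card [Fintype A] (k : ℕ) (s : Fin n → A) :
    HkF k s ≤ Real.logb 2 (Fintype.card A) := by
  have hL : 0 ≤ Real.logb 2 (Fintype.card A) := by exact_mod_cast Real.logb_natCast_nonneg 2 _
  have hsum : ∑ α : Fin k → A, (Multiset.card (ctxF k s α) : ℝ) * H0M (ctxF k s α)
      ≤ Real.logb 2 (Fintype.card A) * n :=
    calc _ ≤ ∑ α : Fin k → A, (Multiset.card (ctxF k s α) : ℝ) * Real.logb 2 (Fintype.card A) := by
          gcongr
          exact H0M_le_logb_card _
      _ ≤ Real.logb 2 (Fintype.card A) * n := by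
          rw [← Finset.sum_mul, mul_comm]
          gcongr
          exact_mod_cast sum_card_ctxF_le k s
  rw [HkF, one_div_mul_eq_div]
  exact div_le_of_le_mul₀ n.cast_nonneg hL hsum

theorem HkF_eq_zero [Fintype A] {k : ℕ} {s : Fin n → A}
    (h : ∀ j < n, ∀ i < j, ¬ MatchAt s k i j) : HkF k s = 0 := by
  simp [HkF, H0M_eq_zero_of_card_le_one (card_ctxF_le_one h _)]

end Contexts

section Matches

variable {A : Type*} {n : ℕ}

theorem MatchAt.eq_of_eq_outside {s s' : Fin n → A} {k i j : ℕ} (hij : i < j)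
    (hs : MatchAt s k i j) (hs' : MatchAt s' k i j)
    (h : ∀ v : Fin n, (v : ℕ) < j ∨ j + k ≤ v → s v = s' v) : s = s' := by
  -- Inside the window `[j, j + k)` each letter is copied from the earlier position `i + (v - j)`.
  suffices ∀ v (hv : v < n), s ⟨v, hv⟩ = s' ⟨v, hv⟩ from funext fun v => this v v.isLt
  intro v
  induction v using Nat.strong_induction_on with
  | _ v ih =>
    intro hv
    by_cases hw : j ≤ v ∧ v < j + k
    · obtain ⟨t, rfl⟩ : ∃ t, v = j + t := ⟨v - j, by omega⟩
      have hit : i + t < n := by omega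
      rw [← hs.2.2 t (by omega) hit hv, ← hs'.2.2 t (by omega) hit hv]
      exact ih _ (by omega) hit
    · exact h ⟨v, hv⟩ (by dsimp only; omega)

theorem card_filter_matchAt_le [Fintype A] {k i j : ℕ} (hij : i < j) (hjk : j + k ≤ n) :
    #{s : Fin n → A | MatchAt s k i j} ≤ Fintype.card A ^ (n - k) := by
  let skip : Fin (n - k) → Fin n := fun m => ⟨if (m : ℕ) < j then m else m + k, by split <;> omega⟩
  have hskip : ∀ v : Fin n, (v : ℕ) < j ∨ j + k ≤ v → ∃ m, skip m = v := by
    rintro v (hv | hv)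
    · exact ⟨⟨v, by omega⟩, Fin.ext (by simp [skip, hv])⟩
    · exact ⟨⟨v - k, by omega⟩, Fin.ext (by simp only [skip]; split <;> omega)⟩
  calc #{s : Fin n → A | MatchAt s k i j}
      ≤ #(Finset.univ : Finset (Fin (n - k) → A)) := by
        refine Finset.card_le_card_of_injOn (· ∘ skip)
          (fun _ _ => Finset.mem_coe.2 (Finset.mem_univ _)) ?_
        intro s hs s' hs' heq
        simp only [Finset.coe_filter, Finset.mem_univ, true_and, Set.mem_ofPred_eq] at hs hs'
        refine hs.eq_of_eq_outside hij hs' fun v hv => ?_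
        obtain ⟨m, rfl⟩ := hskip v hv
        exact congrFun heq m
    _ = Fintype.card A ^ (n - k) := by simp

theorem card_filter_matchAt_mul_pow_le [Fintype A] {k i j : ℕ} (hij : i < j) :
    #{s : Fin n → A | MatchAt s k i j} * Fintype.card A ^ k ≤ Fintype.card A ^ n := by
  by_cases hjk : j + k ≤ n
  · calc #{s : Fin n → A | MatchAt s k i j} * Fintype.card A ^ k
        ≤ Fintype.card A ^ (n - k) * Fintype.card A ^ k := by
          gcongr
          exact card_filter_matchAt_le hij hjk
      _ = Fintype.card A ^ n := by rw [← pow_add, Nat.sub_add_cancel (by omega)]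
  · have hempty : #{s : Fin n → A | MatchAt s k i j} = 0 :=
      Finset.card_eq_zero.2 (Finset.filter_eq_empty_iff.2 fun s _ hs => hjk hs.2.1)
    simp [hempty]

theorem card_filter_exists_matchAt_mul_pow_le [Fintype A] (k : ℕ) :
    #{s : Fin n → A | ∃ j < n, ∃ i < j, MatchAt s k i j} * Fintype.card A ^ k
      ≤ n.choose 2 * Fintype.card A ^ n := by
  calc #{s : Fin n → A | ∃ j < n, ∃ i < j, MatchAt s k i j} * Fintype.card A ^ k
      ≤ (∑ j ∈ Finset.range n, ∑ i ∈ Finset.range j, #{s : Fin n → A | MatchAt s k i j}) *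
          Fintype.card A ^ k := by
        gcongr
        refine (Finset.card_le_card fun s hs => ?_).trans
          (Finset.card_biUnion_le.trans (Finset.sum_le_sum fun j _ => Finset.card_biUnion_le))
        simp only [Finset.mem_filter, Finset.mem_univ, true_and] at hs
        obtain ⟨j, hj, i, hi, hm⟩ := hs
        simp only [Finset.mem_biUnion, Finset.mem_range, Finset.mem_filter, Finset.mem_univ,
          true_and]
        exact ⟨j, hj, i, hi, hm⟩
    _ ≤ ∑ j ∈ Finset.range n, ∑ i ∈ Finset.range j, Fintype.card A ^ n := by
        simp only [Finset.sum_mul]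
        gcongr with j _ i hi
        exact card_filter_matchAt_mul_pow_le (Finset.mem_range.1 hi)
    _ = n.choose 2 * Fintype.card A ^ n := by
        simp [← Finset.sum_mul, Finset.sum_range_id, Nat.choose_two_right]

end Matches

/-- For a uniformly random σ-ary string of length `n ≥ 1`, the expected `k`-th
order empirical entropy is at most `(C(n,2)/σ^k)·log₂ σ`, hence less than `(n²/σ^k)·log₂ σ`. -/
theorem expected_Hk_le {A : Type*} [Fintype A] {σ n k : ℕ}
    (hσ : Fintype.card A = σ) (hσ2 : 2 ≤ σ) (hn : 0 < n) :
    (1 / (Fintype.card (Fin n → A) : ℝ)) * (∑ s : Fin n → A, HkF k s)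
        ≤ ((n.choose 2 : ℝ) / (σ : ℝ) ^ k) * Real.logb 2 σ
    ∧ (1 / (Fintype.card (Fin n → A) : ℝ)) * (∑ s : Fin n → A, HkF k s)
        < ((n : ℝ) ^ 2 / (σ : ℝ) ^ k) * Real.logb 2 σ := by
  subst hσ
  set L := Real.logb 2 (Fintype.card A)
  set B := ({s : Fin n → A | ∃ j < n, ∃ i < j, MatchAt s k i j} : Finset _)
  have hL : 0 < L := Real.logb_pos one_lt_two (by exact_mod_cast hσ2)
  have hsum : ∑ s : Fin n → A, HkF k s ≤ #B * L := by
    rw [← Finset.sum_filter_of_ne (p := fun s => ∃ j < n, ∃ i < j, MatchAt s k i j)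
      fun s _ hs => by contrapose! hs; exact HkF_eq_zero hs]
    simpa using Finset.sum_le_card_nsmul B _ L fun s _ => HkF_le_logb_card k s
  have hB : (#B : ℝ) * (Fintype.card A : ℝ) ^ k ≤ n.choose 2 * (Fintype.card A : ℝ) ^ n := by
    exact_mod_cast card_filter_exists_matchAt_mul_pow_le k
  have hexp : (1 / (Fintype.card (Fin n → A) : ℝ)) * (∑ s : Fin n → A, HkF k s)
      ≤ ((n.choose 2 : ℝ) / (Fintype.card A : ℝ) ^ k) * L := by
    rw [Fintype.card_fun, Fintype.card_fin, one_div_mul_eq_div, Nat.cast_pow,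
      div_le_iff₀ (by positivity)]
    calc ∑ s : Fin n → A, HkF k s ≤ #B * L := hsum
      _ ≤ (n.choose 2 / (Fintype.card A : ℝ) ^ k * (Fintype.card A : ℝ) ^ n) * L := by
        gcongr
        rwa [div_mul_eq_mul_div, le_div_iff₀ (by positivity)]
      _ = _ := by ring
  have hchoose : (n.choose 2 : ℝ) < (n : ℝ) ^ 2 := by
    exact_mod_cast Nat.choose_lt_pow hn.ne' le_rfl
  exact ⟨hexp, hexp.trans_lt (by gcongr)⟩

end
end

section
/- Suppose an algorithm reads m characters and outputs a guess 'memoryless' or 'Markov'; if it answers 'memoryless' with probability at least 2/3 when the input is i.i.d. uniform over A (|A| = σ), and m²/σ^k ≤ 1/100, then there exists a fixed string s of length m with no two matching k-tuples on which the algorithm answers 'memoryless' with probability at least 2/3 − 1/100; consequently the algorithm errs with that probability on a deterministic k-th order Markov source generating s. -/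
/-!
Strings with two matching `k`-tuples are rare: for each pair of positions `i < j`, a string whose
`k`-tuples at `i` and `j` agree is determined by its characters outside the window `[j, j + k)`,
so there are at most `σ^(m-k)` of them, and at most `m² σ^(m-k) ≤ σ^m / 100` such strings in all.
Since the answer is at most `1`, removing them costs the uniform average at most `1/100`, so some
string without matching `k`-tuples is answered "memoryless" with probability `≥ 2/3 - 1/100`.
In such a string every `k`-tuple occurs at most once, so the character following it is a function
of the tuple: a deterministic `k`-th order Markov source generates the string.
-/

open scoped Classical
open Finset Real Filter

noncomputable section

/-- `s` is generated by a deterministic `k`-th order Markov source: a function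
`f : A^k → A` with `s(i+k) = f(s(i),…,s(i+k-1))` for all valid `i`. -/
def GenByMarkov {A : Type*} {n : ℕ} (k : ℕ) (s : Fin n → A) : Prop :=
  ∃ f : (Fin k → A) → A, ∀ i : ℕ, ∀ (hik : i + k < n),
    f (fun t => s ⟨i + (t : ℕ), by have := t.isLt; omega⟩) = s ⟨i + k, hik⟩

section Matches

variable {A : Type*} {m k i j : ℕ}

theorem genByMarkov_of_not_hasMatch [Nonempty A] {s : Fin m → A} (hs : ¬ HasMatch k s) :
    GenByMarkov k s := by
  let window : {i : ℕ // i + k < m} → Fin k → A := fun i t => s ⟨i + t, by omega⟩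
  have hinj : Function.Injective window := by
    rintro ⟨i, hi⟩ ⟨i', hi'⟩ heq
    have hmatch : ∀ {a b : ℕ} (ha : a + k < m) (hb : b + k < m),
        window ⟨a, ha⟩ = window ⟨b, hb⟩ → MatchAt s k a b := fun ha hb h =>
      ⟨ha.le, hb.le, fun t ht _ _ => congrFun h ⟨t, ht⟩⟩
    rcases lt_trichotomy i i' with hlt | rfl | hgt
    · exact absurd ⟨i, i', hlt, hmatch hi hi' heq⟩ hs
    · rfl
    · exact absurd ⟨i', i, hgt, hmatch hi' hi heq.symm⟩ hs
  refine ⟨Function.extend window (fun i => s ⟨i + k, i.2⟩) fun _ => Classical.arbitrary A, ?_⟩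
  intro i hik
  exact hinj.extend_apply _ _ ⟨i, hik⟩

def skipWindow (j k : ℕ) (x : Fin (m - k)) : Fin m :=
  if (x : ℕ) < j then ⟨x, by omega⟩ else ⟨x + k, by omega⟩

theorem exists_skipWindow_eq (hjk : j + k ≤ m) (q : Fin m) (hq : (q : ℕ) < j ∨ j + k ≤ q) :
    ∃ x : Fin (m - k), skipWindow j k x = q := by
  rcases hq with hq | hq
  · exact ⟨⟨q, by omega⟩, by simp [skipWindow, hq]⟩
  · refine ⟨⟨q - k, by omega⟩, ?_⟩
    rw [skipWindow, if_neg (by simp only; omega)]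
    ext
    simp only
    omega

theorem eq_of_matchAt_of_eq_outside_window {s s' : Fin m → A} (hs : MatchAt s k i j)
    (hs' : MatchAt s' k i j) (hij : i < j)
    (hout : ∀ q : Fin m, (q : ℕ) < j ∨ j + k ≤ q → s q = s' q) : s = s' := by
  suffices ∀ q (hq : q < m), s ⟨q, hq⟩ = s' ⟨q, hq⟩ from funext fun q => this q q.2
  intro q
  induction q using Nat.strong_induction_on with
  | _ q ih =>
    intro hq
    by_cases hw : q < j ∨ j + k ≤ q
    · exact hout ⟨q, hq⟩ hw
    · -- inside the window, `s (j + t)` is a copy of the earlier character `s (i + t)`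
      obtain ⟨t, rfl⟩ : ∃ t, q = j + t := ⟨q - j, by omega⟩
      have hit : i + t < m := by omega
      rw [← hs.2.2 t (by omega) hit hq, ← hs'.2.2 t (by omega) hit hq]
      exact ih _ (by omega) hit

variable [Fintype A]

theorem card_matchAt_mul_pow_le (hij : i < j) :
    #{s : Fin m → A | MatchAt s k i j} * Fintype.card A ^ k ≤ Fintype.card A ^ m := by
  rcases Finset.eq_empty_or_nonempty {s : Fin m → A | MatchAt s k i j} with h | ⟨s₀, hs₀⟩
  · simp [h]
  have hjk : j + k ≤ m := (mem_filter.1 hs₀).2.2.1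
  calc #{s : Fin m → A | MatchAt s k i j} * Fintype.card A ^ k
      ≤ #(univ : Finset (Fin (m - k) → A)) * Fintype.card A ^ k := by
        gcongr
        refine card_le_card_of_injOn (· ∘ skipWindow j k) (fun _ _ => mem_coe.2 (mem_univ _)) ?_
        intro s hs s' hs' heq
        refine eq_of_matchAt_of_eq_outside_window (mem_filter.1 hs).2 (mem_filter.1 hs').2 hij
          fun q hq => ?_
        obtain ⟨x, rfl⟩ := exists_skipWindow_eq hjk q hq
        exact congrFun heq x
    _ = Fintype.card A ^ m := by
        rw [card_univ, Fintype.card_fun, Fintype.card_fin, ← pow_add, Nat.sub_add_cancel (by omega)]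

theorem card_hasMatch_mul_pow_le :
    #{s : Fin m → A | HasMatch k s} * Fintype.card A ^ k ≤ m ^ 2 * Fintype.card A ^ m := by
  -- a match at `i < j` is indexed by `(i, j - 1)`: for `k = 0` the position `j = m` is allowed
  set pairs := (range m ×ˢ range m).filter fun p : ℕ × ℕ => p.1 ≤ p.2
  have hsub : ({s : Fin m → A | HasMatch k s} : Finset _) ⊆
      pairs.biUnion fun p => {s : Fin m → A | MatchAt s k p.1 (p.2 + 1)} := by
    intro s hs
    obtain ⟨i, j, hij, hmatch⟩ := (mem_filter.1 hs).2
    have : j ≤ m := by have := hmatch.2.1; omega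
    simp only [pairs, mem_biUnion, mem_filter, mem_product, mem_range, mem_univ, true_and]
    exact ⟨(i, j - 1), ⟨⟨by omega, by omega⟩, by omega⟩, by rwa [Nat.sub_add_cancel (by omega)]⟩
  calc #{s : Fin m → A | HasMatch k s} * Fintype.card A ^ k
      ≤ (∑ p ∈ pairs, #{s : Fin m → A | MatchAt s k p.1 (p.2 + 1)}) * Fintype.card A ^ k := by
        gcongr
        exact (card_le_card hsub).trans card_biUnion_le
    _ ≤ ∑ _p ∈ pairs, Fintype.card A ^ m := by
        rw [sum_mul]
        exact sum_le_sum fun p hp => card_matchAt_mul_pow_le (Nat.lt_succ_of_le (mem_filter.1 hp).2)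
    _ ≤ m ^ 2 * Fintype.card A ^ m := by
        rw [sum_const, smul_eq_mul]
        gcongr
        exact card_filter_le _ _ |>.trans (by simp [sq])

theorem card_hasMatch_le [Nonempty A] {ε : ℝ} (hm : (m : ℝ) ^ 2 / Fintype.card A ^ k ≤ ε) :
    (#{s : Fin m → A | HasMatch k s} : ℝ) ≤ ε * Fintype.card (Fin m → A) := by
  have hσk : (0 : ℝ) < Fintype.card A ^ k := by positivity
  have hcount : (#{s : Fin m → A | HasMatch k s} : ℝ) * Fintype.card A ^ k ≤
      m ^ 2 * Fintype.card A ^ m := by exact_mod_cast card_hasMatch_mul_pow_le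
  rw [div_le_iff₀ hσk] at hm
  rw [Fintype.card_fun, Fintype.card_fin, Nat.cast_pow]
  refine le_of_mul_le_mul_right (hcount.trans ?_) hσk
  calc (m : ℝ) ^ 2 * Fintype.card A ^ m ≤ ε * Fintype.card A ^ k * Fintype.card A ^ m := by
        gcongr
    _ = ε * Fintype.card A ^ m * Fintype.card A ^ k := by ring

end Matches

theorem exists_not_and_sub_le_of_le_average {α : Type*} [Fintype α] [Nonempty α]
    (Q : α → Prop) (f : α → ℝ) (hf : ∀ x, f x ≤ 1) {c ε : ℝ} (hεc : ε < c)
    (havg : c ≤ 1 / Fintype.card α * ∑ x, f x) (hbad : (#{x | Q x} : ℝ) ≤ ε * Fintype.card α) :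
    ∃ x, ¬ Q x ∧ c - ε ≤ f x := by
  have hN : (0 : ℝ) < Fintype.card α := by exact_mod_cast Fintype.card_pos
  rw [one_div, inv_mul_eq_div, le_div_iff₀ hN] at havg
  have hbadSum : ∑ x with Q x, f x ≤ ε * Fintype.card α :=
    (sum_le_card_nsmul _ _ 1 fun x _ => hf x).trans (by simpa using hbad)
  have hgood : (c - ε) * Fintype.card α ≤ ∑ x with ¬ Q x, f x := by
    linarith [sum_filter_add_sum_filter_not univ Q f]
  have hne : (univ.filter fun x => ¬ Q x).Nonempty := by
    refine nonempty_iff_ne_empty.2 fun h => ?_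
    rw [h, sum_empty] at hgood
    exact (mul_pos (sub_pos.2 hεc) hN).not_ge hgood
  obtain ⟨x, hx, hfx⟩ := exists_le_of_sum_le hne <| calc
    ∑ x with ¬ Q x, (c - ε) = (c - ε) * #{x | ¬ Q x} := by rw [sum_const, nsmul_eq_mul, mul_comm]
    _ ≤ (c - ε) * Fintype.card α :=
        mul_le_mul_of_nonneg_left (by exact_mod_cast card_le_univ _) (by linarith)
    _ ≤ ∑ x with ¬ Q x, f x := hgood
  exact ⟨x, (mem_filter.1 hx).2, hfx⟩

/-- If a (randomized) algorithm reading `m` characters answers "memoryless"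
with probability at least `2/3` on i.i.d. uniform input, and `m²/σ^k ≤ 1/100`, then there
is a fixed string `s` of length `m` with no two matching `k`-tuples on which it answers
"memoryless" with probability at least `2/3 - 1/100`; consequently it errs with that
probability on a deterministic `k`-th order Markov source generating `s`. -/
theorem exists_bad_string_for_algorithm {A : Type*} [Fintype A] {σ m k : ℕ}
    (hσ : Fintype.card A = σ) (hσ2 : 2 ≤ σ)
    (alg : (Fin m → A) → ℝ) (h01 : ∀ x, 0 ≤ alg x ∧ alg x ≤ 1)
    (hunif : 2 / 3 ≤ (1 / (Fintype.card (Fin m → A) : ℝ)) * ∑ x : Fin m → A, alg x)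
    (hm : (m : ℝ) ^ 2 / (σ : ℝ) ^ k ≤ 1 / 100) :
    ∃ s : Fin m → A, ¬ HasMatch k s ∧ 2 / 3 - 1 / 100 ≤ alg s ∧ GenByMarkov k s := by
  have : Nonempty A := Fintype.card_pos_iff.mp (by omega)
  obtain ⟨s, hs, hval⟩ := exists_not_and_sub_le_of_le_average (HasMatch k) alg
    (fun x => (h01 x).2) (by norm_num) hunif (card_hasMatch_le (hσ ▸ hm))
  exact ⟨s, hs, hval, genByMarkov_of_not_hasMatch hs⟩

end
end
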